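/- arXiv:2401.04981 — 4 statements merged into one kernel-verified Lean document; each statement's English description precedes it below -/
import Mathlib

section
/- Let Y_d(n) be the sum of n independent random variables each uniform on {1/d, 2/d, …, (d−1)/d}, and for an integer m let α_m = P(Y_d(n) = m) and β_m = P(Z_d(n) = m) where Z_d(n) is Y_d(n) conditioned on being an integer. Then α_m = (1/d + (−1)^n/(d(d−1)^{n−1})) · β_m. -/
/-!
Since `Z` is `Y` conditioned on `Y ∈ ℤ`, `α_m = P(Y ∈ ℤ) · β_m`, and `P(Y ∈ ℤ) = N_n / (d - 1)ⁿ`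
where `N_n` counts the tuples in `{1, …, d - 1}ⁿ` whose sum is divisible by `d`. A tuple of length
`n + 1` with sum divisible by `d` is a tuple of length `n` whose sum is *not* divisible by `d`,
extended by the unique digit that completes the sum to a multiple of `d`. Hence
`N_{n+1} + N_n = (d - 1)ⁿ`, and induction gives `d N_n = (d - 1)ⁿ + (-1)ⁿ (d - 1)`.
-/

open Finset

def divisibleTupleCount (d n : ℕ) : ℕ :=
  #{a : Fin n → Fin (d - 1) | d ∣ ∑ i, ((a i : ℕ) + 1)}

lemma card_filter_dvd_succ_add {d : ℕ} (hd : 0 < d) (s : ℕ) :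
    #{x : Fin (d - 1) | d ∣ ((x : ℕ) + 1) + s} = if d ∣ s then 0 else 1 := by
  split_ifs with hs
  · refine card_eq_zero.mpr (filter_eq_empty_iff.mpr fun x _ hx => ?_)
    have := Nat.le_of_dvd x.succ_pos ((Nat.dvd_add_left hs).mp hx)
    omega
  · have hr : 0 < s % d := Nat.pos_of_ne_zero (mt Nat.dvd_of_mod_eq_zero hs)
    have hrd : s % d < d := Nat.mod_lt _ hd
    have hrs : s % d ≤ s := Nat.mod_le s d
    have hdvd_iff (y : ℕ) : d ∣ y + s ↔ d ∣ y + s % d := by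
      rw [show y + s = y + s % d + (s - s % d) by omega]
      exact Nat.dvd_add_left (Nat.dvd_sub_mod s)
    refine card_eq_one.mpr ⟨⟨d - s % d - 1, by omega⟩, eq_singleton_iff_unique_mem.mpr ⟨?_, ?_⟩⟩
    · simp only [mem_filter, mem_univ, true_and, hdvd_iff]
      rw [show d - s % d - 1 + 1 + s % d = d by omega]
    · intro x hx
      simp only [mem_filter, mem_univ, true_and, hdvd_iff] at hx
      -- `0 < x + 1 + s % d < 2 * d`, so the only multiple of `d` it can be is `d` itself
      have := Nat.eq_of_dvd_of_lt_two_mul (by omega) hx (by omega)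
      ext
      simp only
      omega

lemma divisibleTupleCount_succ_add {d : ℕ} (hd : 0 < d) (n : ℕ) :
    divisibleTupleCount d (n + 1) + divisibleTupleCount d n = (d - 1) ^ n := by
  have hsplit : divisibleTupleCount d (n + 1) =
      ∑ a : Fin n → Fin (d - 1), #{x : Fin (d - 1) | d ∣ ((x : ℕ) + 1) + ∑ i, ((a i : ℕ) + 1)} := by
    simp only [divisibleTupleCount, card_filter]
    rw [← (Fin.consEquiv fun _ => Fin (d - 1)).sum_comp, Fintype.sum_prod_type, sum_comm]
    simp [Fin.sum_univ_succ, add_assoc]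
  rw [hsplit]
  simp only [card_filter_dvd_succ_add hd, divisibleTupleCount]
  have hcompl := card_filter_add_card_filter_not (s := univ)
    fun a : Fin n → Fin (d - 1) => d ∣ ∑ i, ((a i : ℕ) + 1)
  simp only [card_filter, ite_not, card_univ, Fintype.card_fun, Fintype.card_fin] at hcompl ⊢
  omega

lemma mul_divisibleTupleCount {d : ℕ} (hd : 0 < d) (n : ℕ) :
    (d : ℤ) * divisibleTupleCount d n = ((d : ℤ) - 1) ^ n + (-1) ^ n * ((d : ℤ) - 1) := by
  induction n with
  | zero => simp [divisibleTupleCount]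
  | succ n ih =>
    have h : (divisibleTupleCount d (n + 1) : ℤ) + divisibleTupleCount d n = ((d : ℤ) - 1) ^ n := by
      have := congrArg (Nat.cast : ℕ → ℤ) (divisibleTupleCount_succ_add hd n)
      push_cast [Nat.cast_sub (show 1 ≤ d from hd)] at this
      exact this
    linear_combination (d : ℤ) * h - ih

lemma divisibleTupleCount_div_pow {d n : ℕ} (hd : 2 ≤ d) (hn : 1 ≤ n) :
    (divisibleTupleCount d n : ℝ) / ((d : ℝ) - 1) ^ n
      = 1 / d + (-1 : ℝ) ^ n / (d * ((d : ℝ) - 1) ^ (n - 1)) := by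
  obtain ⟨k, rfl⟩ := Nat.exists_eq_add_of_le' hn
  have hcount : (d : ℝ) * divisibleTupleCount d (k + 1)
      = ((d : ℝ) - 1) ^ (k + 1) + (-1) ^ (k + 1) * ((d : ℝ) - 1) := by
    exact_mod_cast mul_divisibleTupleCount (by omega) (k + 1)
  have hd1 : (d : ℝ) - 1 ≠ 0 := sub_ne_zero.mpr (by norm_cast; omega)
  have hd0 : (d : ℝ) ≠ 0 := by positivity
  rw [Nat.add_sub_cancel]
  field_simp
  linear_combination ((d : ℝ) - 1) ^ k * hcount

lemma card_filter_sum_eq_mul_le (d n : ℕ) (m : ℤ) :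
    #{a : Fin n → Fin (d - 1) | ((∑ i, ((a i : ℕ) + 1) : ℕ) : ℤ) = m * d}
      ≤ divisibleTupleCount d n :=
  card_le_card <| monotone_filter_right _ fun _ _ ha =>
    Int.natCast_dvd_natCast.mp ⟨m, ha.trans (mul_comm _ _)⟩

/-- Let `Y_d(n)` be the sum of `n` i.i.d. uniforms on `{1/d, …, (d−1)/d}` and
`Z_d(n)` be `Y_d(n)` conditioned on being an integer.  For an integer `m`, with
`α_m = P(Y_d(n) = m)` and `β_m = P(Z_d(n) = m)`, one has
`α_m = (1/d + (−1)ⁿ/(d(d−1)^{n−1})) · β_m`.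
Tuples are realized as `a : Fin n → Fin (d−1)` with coordinate values `a i + 1`,
so `Y_d(n) = (∑ (a i + 1))/d` and `Y_d(n) = m` iff `∑ (a i + 1) = m·d`. -/
theorem stmt_8 (d n : ℕ) (hd : 2 ≤ d) (hn : 1 ≤ n) (m : ℤ) :
    ((Finset.univ.filter
        (fun a : Fin n → Fin (d - 1) => ((∑ i, ((a i : ℕ) + 1) : ℕ) : ℤ) = m * d)).card : ℝ)
      / ((d : ℝ) - 1) ^ n
    = (1 / d + (-1 : ℝ) ^ n / (d * ((d : ℝ) - 1) ^ (n - 1))) *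
      (((Finset.univ.filter
          (fun a : Fin n → Fin (d - 1) => ((∑ i, ((a i : ℕ) + 1) : ℕ) : ℤ) = m * d)).card : ℝ)
        / ((Finset.univ.filter
            (fun a : Fin n → Fin (d - 1) => d ∣ ∑ i, ((a i : ℕ) + 1))).card : ℝ)) := by
  have hle := card_filter_sum_eq_mul_le d n m
  rw [← divisibleTupleCount_div_pow hd hn, div_mul_eq_mul_div]
  congr 1
  refine (mul_div_cancel_of_imp' fun hzero => ?_).symm
  have : divisibleTupleCount d n = 0 := by exact_mod_cast hzero
  exact_mod_cast Nat.eq_zero_of_le_zero (this ▸ hle)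
end

section
/- For d ≥ n ≥ 500000, the variance of Z'_d(n) satisfies Var(Z'_d(n)) ≥ n(d−3)/(6d) − √(3n). -/
/-- The sum `∑ (a i + 1)` attached to a tuple `a : Fin n → Fin (d−1)`;
`Y_d(n)(a)` is this divided by `d`. -/
def tupleSum (d n : ℕ) (a : Fin n → Fin (d - 1)) : ℕ := ∑ i, ((a i : ℕ) + 1)

/-- The tuples on which `Y_d(n)` is an integer, i.e. the event defining `Z_d(n)`. -/
def intTuples (d n : ℕ) : Finset (Fin n → Fin (d - 1)) :=
  Finset.univ.filter (fun a => d ∣ tupleSum d n a)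

/-- The value of `Z'_d(n)` (sum of two independent copies of `Z_d(n)`) on a pair
of tuples. -/
noncomputable def Z' (d n : ℕ) (a b : Fin n → Fin (d - 1)) : ℝ :=
  ((tupleSum d n a : ℝ) + tupleSum d n b) / d

/-- The mean of `Z'_d(n)`. -/
noncomputable def Z'mean (d n : ℕ) : ℝ :=
  (∑ a ∈ intTuples d n, ∑ b ∈ intTuples d n, Z' d n a b)
    / ((intTuples d n).card : ℝ) ^ 2

/-!
With `S a = ∑ i, (a i + 1)` and `ω` a primitive `d`-th root of unity, the roots-of-unity filter
gives `d * ∑_{d ∣ S a} S a ^ k = ∑_{c < d} ∑_a S a ^ k * ω ^ (c * S a)`. The inner sums are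
`(z d/dz) ^ k (f z ^ n)` at `z = ω ^ c`, where `f z = z + ⋯ + z ^ (d - 1)`; as `f 1 = d - 1`
and `f (ω ^ c) = -1` for `0 < c < d`, the number `N` of tuples with `d ∣ S` and the first two
moments of `S` over them come out in closed form. This gives
`Var Z' = n (d - 2) / (6 d) - (-1) ^ n n (n - 1) (d - 1) (d - 2) / (6 d N)`, whose correction
term is at most `1` because `d N ≥ (d - 1) ^ n - (d - 1)`.
-/

open Finset

section RootsOfUnity

variable {R : Type*} [CommRing R] [IsDomain R]

theorem geom_sum_eq_zero_of_pow_eq_one {ζ : R} {d : ℕ} (hζ : ζ ^ d = 1) (hζ1 : ζ ≠ 1) :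
    ∑ i ∈ range d, ζ ^ i = 0 := by
  have h := geom_sum_mul ζ d
  rw [hζ, sub_self] at h
  exact (mul_eq_zero.mp h).resolve_right (sub_ne_zero.mpr hζ1)

variable {ω : R} {d : ℕ}

theorem IsPrimitiveRoot.sum_pow_pow_eq_ite (hω : IsPrimitiveRoot ω d) (k : ℕ) :
    ∑ c ∈ range d, (ω ^ c) ^ k = if d ∣ k then (d : R) else 0 := by
  simp_rw [← pow_mul, mul_comm _ k, pow_mul]
  split_ifs with hk
  · simp [(hω.pow_eq_one_iff_dvd k).mpr hk]
  · refine geom_sum_eq_zero_of_pow_eq_one ?_ fun h => hk ((hω.pow_eq_one_iff_dvd k).mp h)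
    rw [← pow_mul, mul_comm, pow_mul, hω.pow_eq_one, one_pow]

theorem IsPrimitiveRoot.mul_sum_filter_dvd (hω : IsPrimitiveRoot ω d) {α : Type*}
    (s : Finset α) (φ : α → ℕ) (g : α → R) :
    (d : R) * ∑ a ∈ s with d ∣ φ a, g a
      = ∑ c ∈ range d, ∑ a ∈ s, g a * (ω ^ c) ^ φ a := by
  rw [sum_comm, sum_filter, mul_sum]
  refine sum_congr rfl fun a _ => ?_
  rw [← mul_sum, hω.sum_pow_pow_eq_ite]
  split_ifs <;> ring

end RootsOfUnity

section GeneratingFunction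

variable {ι : Type*} (w : ι → ℕ)

def weightSum {n : ℕ} (a : Fin n → ι) : ℕ := ∑ i, w (a i)

theorem weightSum_cons {n : ℕ} (x : ι) (a : Fin n → ι) :
    weightSum w (Fin.cons x a : Fin (n + 1) → ι) = w x + weightSum w a := by
  simp [weightSum, Fin.sum_univ_succ]

variable [Fintype ι] {R : Type*} [CommSemiring R]

-- `digitMoment w k` and `tupleMoment w n k` are `(z d/dz) ^ k` applied to `∑ x, z ^ w x` and to
-- its `n`-th power `∑ a : Fin n → ι, z ^ weightSum w a`.
def digitMoment (k : ℕ) (z : R) : R := ∑ x, (w x : R) ^ k * z ^ w x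

def tupleMoment (n k : ℕ) (z : R) : R :=
  ∑ a : Fin n → ι, (weightSum w a : R) ^ k * z ^ weightSum w a

theorem digitMoment_one (k : ℕ) : digitMoment w k (1 : R) = ∑ x, (w x : R) ^ k := by
  simp [digitMoment]

theorem tupleMoment_zero (k : ℕ) (z : R) : tupleMoment w 0 k z = 0 ^ k := by
  simp [tupleMoment, weightSum]

theorem tupleMoment_succ (n k : ℕ) (z : R) :
    tupleMoment w (n + 1) k z =
      ∑ j ∈ range (k + 1), k.choose j * digitMoment w j z * tupleMoment w n (k - j) z := by
  rw [tupleMoment, ← (Fin.consEquiv fun _ => ι).sum_comp, Fintype.sum_prod_type]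
  simp only [Fin.consEquiv, Equiv.coe_fn_mk, weightSum_cons, digitMoment, tupleMoment,
    sum_mul, mul_sum]
  conv_lhs => rw [sum_comm]
  conv_rhs => rw [sum_comm]
  refine sum_congr rfl fun a _ => ?_
  conv_rhs => rw [sum_comm]
  refine sum_congr rfl fun x _ => ?_
  push_cast
  rw [add_pow, sum_mul, pow_add]
  refine sum_congr rfl fun j _ => ?_
  ring

theorem tupleMoment_succ_zero (n : ℕ) (z : R) :
    tupleMoment w (n + 1) 0 z = digitMoment w 0 z * tupleMoment w n 0 z := by
  simp [tupleMoment_succ]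

theorem tupleMoment_succ_one (n : ℕ) (z : R) :
    tupleMoment w (n + 1) 1 z
      = digitMoment w 0 z * tupleMoment w n 1 z + digitMoment w 1 z * tupleMoment w n 0 z := by
  simp [tupleMoment_succ, sum_range_succ]

theorem tupleMoment_succ_two (n : ℕ) (z : R) :
    tupleMoment w (n + 1) 2 z = digitMoment w 0 z * tupleMoment w n 2 z
      + 2 * digitMoment w 1 z * tupleMoment w n 1 z + digitMoment w 2 z * tupleMoment w n 0 z := by
  simp [tupleMoment_succ, sum_range_succ]

theorem tupleMoment_order_zero (n : ℕ) (z : R) :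
    tupleMoment w n 0 z = digitMoment w 0 z ^ n := by
  induction n with
  | zero => simp [tupleMoment_zero]
  | succ n ih => rw [tupleMoment_succ_zero, ih, pow_succ, mul_comm]

theorem tupleMoment_order_one (n : ℕ) (z : R) :
    tupleMoment w (n + 1) 1 z = (n + 1) * digitMoment w 1 z * digitMoment w 0 z ^ n := by
  induction n with
  | zero => simp [tupleMoment_succ_one, tupleMoment_zero]
  | succ n ih =>
    rw [tupleMoment_succ_one, ih, tupleMoment_order_zero]
    push_cast
    ring

theorem tupleMoment_order_two (n : ℕ) (z : R) :
    tupleMoment w (n + 2) 2 z = (n + 2) * digitMoment w 2 z * digitMoment w 0 z ^ (n + 1)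
      + (n + 2) * (n + 1) * digitMoment w 1 z ^ 2 * digitMoment w 0 z ^ n := by
  induction n with
  | zero =>
    rw [tupleMoment_succ_two, tupleMoment_order_one, tupleMoment_order_zero,
      tupleMoment_succ_two, tupleMoment_zero, tupleMoment_zero, tupleMoment_zero]
    push_cast
    ring
  | succ n ih =>
    rw [tupleMoment_succ_two, ih, tupleMoment_order_one, tupleMoment_order_zero]
    push_cast
    ring

end GeneratingFunction

section Digits

variable {d : ℕ}

def digit (d : ℕ) (x : Fin (d - 1)) : ℕ := x + 1

theorem digit_lt (x : Fin (d - 1)) : digit d x < d := by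
  have := x.isLt
  simp only [digit]
  omega

theorem sum_digit {M : Type*} [AddCommMonoid M] (f : ℕ → M) :
    ∑ x, f (digit d x) = ∑ i ∈ range (d - 1), f (i + 1) :=
  Fin.sum_univ_eq_sum_range (fun i => f (i + 1)) _

variable {R : Type*} [CommRing R]

theorem two_mul_sum_range_add_one (m : ℕ) :
    (2 : R) * ∑ i ∈ range m, ((i : R) + 1) = m * (m + 1) := by
  induction m with
  | zero => simp
  | succ m ih => rw [sum_range_succ, mul_add, ih]; push_cast; ring

theorem six_mul_sum_range_add_one_sq (m : ℕ) :
    (6 : R) * ∑ i ∈ range m, ((i : R) + 1) ^ 2 = m * (m + 1) * (2 * m + 1) := by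
  induction m with
  | zero => simp
  | succ m ih => rw [sum_range_succ, mul_add, ih]; push_cast; ring

theorem digitMoment_digit_one (k : ℕ) :
    digitMoment (digit d) k (1 : R) = ∑ i ∈ range (d - 1), ((i : R) + 1) ^ k := by
  rw [digitMoment_one, sum_digit (fun j => (j : R) ^ k)]
  push_cast
  rfl

theorem digitMoment_zero_digit_one (hd : 0 < d) : digitMoment (digit d) 0 (1 : R) = d - 1 := by
  simp [digitMoment_digit_one, Nat.cast_sub hd]

theorem two_mul_digitMoment_one_digit_one (hd : 0 < d) :
    2 * digitMoment (digit d) 1 (1 : R) = d * (d - 1) := by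
  obtain ⟨m, rfl⟩ : ∃ m, d = m + 1 := ⟨d - 1, by omega⟩
  simp only [digitMoment_digit_one, pow_one, Nat.add_sub_cancel, two_mul_sum_range_add_one]
  push_cast; ring

theorem six_mul_digitMoment_two_digit_one (hd : 0 < d) :
    6 * digitMoment (digit d) 2 (1 : R) = d * (d - 1) * (2 * d - 1) := by
  obtain ⟨m, rfl⟩ : ∃ m, d = m + 1 := ⟨d - 1, by omega⟩
  simp only [digitMoment_digit_one, Nat.add_sub_cancel, six_mul_sum_range_add_one_sq]
  push_cast; ring

end Digits

section DigitsAtRoots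

variable {d : ℕ} {R : Type*} [CommRing R] [IsDomain R]

theorem digitMoment_zero_digit_of_pow_eq_one (hd : 0 < d) {ζ : R} (hζ : ζ ^ d = 1)
    (hζ1 : ζ ≠ 1) : digitMoment (digit d) 0 ζ = -1 := by
  obtain ⟨m, rfl⟩ : ∃ m, d = m + 1 := ⟨d - 1, by omega⟩
  have h := geom_sum_eq_zero_of_pow_eq_one hζ hζ1
  rw [sum_range_succ'] at h
  simp only [digitMoment, pow_zero, one_mul, sum_digit (fun j => ζ ^ j), Nat.add_sub_cancel]
  linear_combination h

theorem digit_not_dvd (x : Fin (d - 1)) : ¬ d ∣ digit d x := fun h =>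
  (digit_lt x).not_ge (Nat.le_of_dvd (Nat.succ_pos _) h)

theorem IsPrimitiveRoot.sum_digitMoment_digit {ω : R} (hω : IsPrimitiveRoot ω d) (k : ℕ) :
    ∑ c ∈ range d, digitMoment (digit d) k (ω ^ c) = 0 := by
  have h := hω.mul_sum_filter_dvd univ (digit d) (fun x => (digit d x : R) ^ k)
  rw [filter_false_of_mem fun x _ => digit_not_dvd x, sum_empty, mul_zero] at h
  exact h.symm

theorem sum_digit_ite_dvd_add {M : Type*} [AddCommMonoid M] (x : Fin (d - 1)) (f : ℕ → M) :
    ∑ y, (if d ∣ digit d x + digit d y then f (digit d y) else 0) = f (d - digit d x) := by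
  have hx := x.isLt
  set y₀ : Fin (d - 1) := ⟨d - 2 - x, by omega⟩
  have hdvd_iff : ∀ y, d ∣ digit d x + digit d y ↔ y = y₀ := by
    intro y
    have hy := y.isLt
    rw [Fin.ext_iff]
    constructor
    · intro h
      have := Nat.eq_of_dvd_of_lt_two_mul (by simp [digit]) h (by simp only [digit]; omega)
      simp only [digit, y₀] at this ⊢
      omega
    · intro h
      simp only [digit, y₀] at h ⊢
      rw [show (x : ℕ) + 1 + ((y : ℕ) + 1) = d by omega]
  simp only [hdvd_iff, Fintype.sum_ite_eq']
  congr 1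
  simp only [digit, y₀]
  omega

theorem IsPrimitiveRoot.six_mul_sum_digitMoment_one_sq {ω : R} (hω : IsPrimitiveRoot ω d)
    (hd : 0 < d) :
    6 * ∑ c ∈ range d, digitMoment (digit d) 1 (ω ^ c) ^ 2 = d ^ 2 * (d - 1) * (d + 1) := by
  have hsq : ∀ c, digitMoment (digit d) 1 (ω ^ c) ^ 2 = ∑ x, ∑ y,
      (digit d x : R) * digit d y * (ω ^ c) ^ (digit d x + digit d y) := by
    intro c
    simp only [digitMoment, pow_one, sq, sum_mul_sum, pow_add]
    refine sum_congr rfl fun x _ => sum_congr rfl fun y _ => by ring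
  have hfilter : ∀ x : Fin (d - 1), ∑ c ∈ range d, ∑ y,
      (digit d x : R) * digit d y * (ω ^ c) ^ (digit d x + digit d y)
        = d * (digit d x * (d - digit d x)) := by
    intro x
    rw [sum_comm]
    simp_rw [← mul_sum, hω.sum_pow_pow_eq_ite, mul_ite, mul_zero]
    rw [sum_digit_ite_dvd_add x (fun j => (digit d x : R) * j * d),
      Nat.cast_sub (digit_lt x).le]
    ring
  simp_rw [hsq]
  rw [sum_comm, sum_congr rfl fun x _ => hfilter x, ← mul_sum,
    sum_digit (fun j => (j : R) * (d - j))]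
  obtain ⟨m, rfl⟩ : ∃ m, d = m + 1 := ⟨d - 1, by omega⟩
  have h1 := two_mul_sum_range_add_one (R := R) m
  have h2 := six_mul_sum_range_add_one_sq (R := R) m
  simp only [Nat.add_sub_cancel, mul_sub, sum_sub_distrib, ← sum_mul, ← sq]
  push_cast
  linear_combination 3 * ((m : R) + 1) ^ 2 * h1 - ((m : R) + 1) * h2

end DigitsAtRoots

namespace IsPrimitiveRoot

variable {d : ℕ} {R : Type*} [CommRing R] [IsDomain R] {ω : R}

theorem mul_sum_intTuples (hω : IsPrimitiveRoot ω d) (n k : ℕ) :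
    (d : R) * ∑ a ∈ intTuples d n, (tupleSum d n a : R) ^ k
      = ∑ c ∈ range d, tupleMoment (digit d) n k (ω ^ c) :=
  hω.mul_sum_filter_dvd univ (tupleSum d n) fun a => (tupleSum d n a : R) ^ k

theorem digitMoment_zero_digit_pow (hω : IsPrimitiveRoot ω d) {c : ℕ}
    (hc : c ∈ (range d).erase 0) : digitMoment (digit d) 0 (ω ^ c) = -1 := by
  obtain ⟨hc0, hcd⟩ := mem_erase.mp hc
  rw [mem_range] at hcd
  refine digitMoment_zero_digit_of_pow_eq_one (by omega) ?_ (hω.pow_ne_one_of_pos_of_lt hc0 hcd)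
  rw [← pow_mul, mul_comm, pow_mul, hω.pow_eq_one, one_pow]

theorem sum_erase_digitMoment_digit (hω : IsPrimitiveRoot ω d) (hd : 0 < d) (k : ℕ) :
    ∑ c ∈ (range d).erase 0, digitMoment (digit d) k (ω ^ c)
      = -digitMoment (digit d) k 1 := by
  have h := hω.sum_digitMoment_digit k
  rw [← add_sum_erase _ _ (mem_range.mpr hd), pow_zero] at h
  linear_combination h

theorem mul_card_intTuples (hω : IsPrimitiveRoot ω d) (hd : 0 < d) (n : ℕ) :
    (d : R) * #(intTuples d n) = (d - 1) ^ n + (d - 1) * (-1) ^ n := by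
  have h := hω.mul_sum_intTuples n 0
  simp only [pow_zero, sum_const, nsmul_one, tupleMoment_order_zero] at h
  rw [h, ← add_sum_erase _ _ (mem_range.mpr hd), pow_zero, digitMoment_zero_digit_one hd,
    sum_congr rfl fun c hc => by rw [hω.digitMoment_zero_digit_pow hc], sum_const,
    card_erase_of_mem (mem_range.mpr hd), card_range, nsmul_eq_mul, Nat.cast_sub hd]
  ring

end IsPrimitiveRoot

namespace IsPrimitiveRoot

variable {d : ℕ} {K : Type*} [Field K] [CharZero K] {ω : K}

theorem two_mul_sum_tupleSum (hω : IsPrimitiveRoot ω d) (hd : 0 < d) (n : ℕ) :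
    2 * ∑ a ∈ intTuples d n, (tupleSum d n a : K) = n * d * #(intTuples d n) := by
  rcases n with _ | n
  · simp [tupleSum]
  have herase : ∑ c ∈ (range d).erase 0,
      (n + 1) * digitMoment (digit d) 1 (ω ^ c) * digitMoment (digit d) 0 (ω ^ c) ^ n
        = (n + 1) * (-1) ^ n * ∑ c ∈ (range d).erase 0, digitMoment (digit d) 1 (ω ^ c) := by
    rw [mul_sum]
    refine sum_congr rfl fun c hc => ?_
    rw [hω.digitMoment_zero_digit_pow hc]
    ring
  have h := hω.mul_sum_intTuples (n + 1) 1
  simp only [pow_one, tupleMoment_order_one] at h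
  rw [← add_sum_erase _ _ (mem_range.mpr hd), herase, hω.sum_erase_digitMoment_digit hd,
    pow_zero, digitMoment_zero_digit_one hd] at h
  have hN := hω.mul_card_intTuples hd (n + 1)
  have hh := two_mul_digitMoment_one_digit_one (R := K) hd
  refine mul_left_cancel₀ (Nat.cast_ne_zero.mpr hd.ne' : (d : K) ≠ 0) ?_
  push_cast
  linear_combination
    2 * h - (n + 1) * (d : K) * hN + ((n : K) + 1) * ((d - 1) ^ n - (-1) ^ n) * hh

theorem twelve_mul_sum_tupleSum_sq (hω : IsPrimitiveRoot ω d) (hd : 0 < d) (n : ℕ)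
    (hn : 2 ≤ n) :
    12 * ∑ a ∈ intTuples d n, (tupleSum d n a : K) ^ 2
      = (3 * n ^ 2 * d ^ 2 + n * d * (d - 2)) * #(intTuples d n)
        - (-1) ^ n * n * (n - 1) * d * (d - 1) * (d - 2) := by
  obtain ⟨n, rfl⟩ : ∃ m, n = m + 2 := ⟨n - 2, by omega⟩
  have herase : ∑ c ∈ (range d).erase 0,
      ((n + 2) * digitMoment (digit d) 2 (ω ^ c) * digitMoment (digit d) 0 (ω ^ c) ^ (n + 1)
        + (n + 2) * (n + 1) * digitMoment (digit d) 1 (ω ^ c) ^ 2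
          * digitMoment (digit d) 0 (ω ^ c) ^ n)
        = (n + 2) * (-1) ^ (n + 1) * ∑ c ∈ (range d).erase 0, digitMoment (digit d) 2 (ω ^ c)
          + (n + 2) * (n + 1) * (-1) ^ n
            * ∑ c ∈ (range d).erase 0, digitMoment (digit d) 1 (ω ^ c) ^ 2 := by
    rw [mul_sum, mul_sum, ← sum_add_distrib]
    refine sum_congr rfl fun c hc => ?_
    rw [hω.digitMoment_zero_digit_pow hc]
    ring
  have hP := hω.six_mul_sum_digitMoment_one_sq hd
  rw [← add_sum_erase _ _ (mem_range.mpr hd), pow_zero] at hP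
  have h := hω.mul_sum_intTuples (n + 2) 2
  simp only [tupleMoment_order_two] at h
  rw [← add_sum_erase _ _ (mem_range.mpr hd), herase, hω.sum_erase_digitMoment_digit hd,
    pow_zero, digitMoment_zero_digit_one hd] at h
  have hN := hω.mul_card_intTuples hd (n + 2)
  have hh : digitMoment (digit d) 1 (1 : K) = d * (d - 1) / 2 := by
    linear_combination two_mul_digitMoment_one_digit_one (R := K) hd / 2
  have hq : digitMoment (digit d) 2 (1 : K) = d * (d - 1) * (2 * d - 1) / 6 := by
    linear_combination six_mul_digitMoment_two_digit_one (R := K) hd / 6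
  have hP' : ∑ c ∈ (range d).erase 0, digitMoment (digit d) 1 (ω ^ c) ^ 2
      = d ^ 2 * (d - 1) * (d + 1) / 6 - (d * (d - 1) / 2) ^ 2 := by
    rw [← hh]; linear_combination hP / 6
  rw [hP', hh, hq] at h
  refine mul_left_cancel₀ (Nat.cast_ne_zero.mpr hd.ne' : (d : K) ≠ 0) ?_
  push_cast
  linear_combination 12 * h - (3 * ((n : K) + 2) ^ 2 * d ^ 2 + (n + 2) * d * (d - 2)) * hN

end IsPrimitiveRoot

section PairSums

variable {α R : Type*} [CommRing R] (s : Finset α) (x : α → R)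

theorem sum_sum_add : ∑ a ∈ s, ∑ b ∈ s, (x a + x b) = 2 * #s * ∑ a ∈ s, x a := by
  simp only [sum_add_distrib, sum_const, nsmul_eq_mul, ← mul_sum]
  ring

theorem sum_sum_add_sub_sq (M : R) :
    ∑ a ∈ s, ∑ b ∈ s, (x a + x b - M) ^ 2
      = 2 * #s * ∑ a ∈ s, x a ^ 2 + 2 * (∑ a ∈ s, x a) ^ 2 - 4 * M * #s * ∑ a ∈ s, x a
        + #s ^ 2 * M ^ 2 := by
  have h : ∀ a b, (x a + x b - M) ^ 2
      = x a ^ 2 + x b ^ 2 + 2 * x a * x b - 2 * M * x a - 2 * M * x b + M ^ 2 := by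
    intro a b; ring
  simp only [h, sum_add_distrib, sum_sub_distrib, sum_const, nsmul_eq_mul, ← mul_sum, ← sum_mul]
  ring

end PairSums

theorem mul_card_intTuples {d : ℕ} (hd : 0 < d) (n : ℕ) :
    (d : ℝ) * #(intTuples d n) = (d - 1) ^ n + (d - 1) * (-1) ^ n := by
  exact_mod_cast (Complex.isPrimitiveRoot_exp d hd.ne').mul_card_intTuples hd n

theorem two_mul_sum_tupleSum {d : ℕ} (hd : 0 < d) (n : ℕ) :
    2 * ∑ a ∈ intTuples d n, (tupleSum d n a : ℝ) = n * d * #(intTuples d n) := by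
  exact_mod_cast (Complex.isPrimitiveRoot_exp d hd.ne').two_mul_sum_tupleSum hd n

theorem twelve_mul_sum_tupleSum_sq {d n : ℕ} (hd : 0 < d) (hn : 2 ≤ n) :
    12 * ∑ a ∈ intTuples d n, (tupleSum d n a : ℝ) ^ 2
      = (3 * n ^ 2 * d ^ 2 + n * d * (d - 2)) * #(intTuples d n)
        - (-1) ^ n * n * (n - 1) * d * (d - 1) * (d - 2) := by
  exact_mod_cast (Complex.isPrimitiveRoot_exp d hd.ne').twelve_mul_sum_tupleSum_sq hd n hn

theorem sub_le_mul_card_intTuples {d : ℕ} (hd : 0 < d) (n : ℕ) :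
    ((d : ℝ) - 1) ^ n - (d - 1) ≤ d * #(intTuples d n) := by
  have hd1 : (0 : ℝ) ≤ d - 1 := by
    rw [sub_nonneg, Nat.one_le_cast]; exact hd
  rw [mul_card_intTuples hd]
  rcases neg_one_pow_eq_or ℝ n with h | h <;> rw [h] <;> linarith

theorem variance_Z'_eq {d n : ℕ} (hd : 3 ≤ d) (hn : 2 ≤ n) :
    (∑ a ∈ intTuples d n, ∑ b ∈ intTuples d n, (Z' d n a b - Z'mean d n) ^ 2)
        / (#(intTuples d n) : ℝ) ^ 2
      = n * (d - 2) / (6 * d) - (-1) ^ n * n * (n - 1) * (d - 1) * (d - 2)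
          / (6 * d * #(intTuples d n)) := by
  have hd' : (3 : ℝ) ≤ d := by exact_mod_cast hd
  have hN : 0 < (#(intTuples d n) : ℝ) := by
    have h := sub_le_mul_card_intTuples (by omega : 0 < d) n
    have : ((d : ℝ) - 1) ^ 2 ≤ (d - 1) ^ n := pow_le_pow_right₀ (by linarith) hn
    nlinarith
  have h1 := two_mul_sum_tupleSum (by omega : 0 < d) n
  have h2 := twelve_mul_sum_tupleSum_sq (by omega : 0 < d) hn
  have hS1 : ∑ a ∈ intTuples d n, (tupleSum d n a : ℝ) = n * d * #(intTuples d n) / 2 := by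
    linarith
  have hS2 : ∑ a ∈ intTuples d n, (tupleSum d n a : ℝ) ^ 2
      = ((3 * n ^ 2 * d ^ 2 + n * d * (d - 2)) * #(intTuples d n)
        - (-1) ^ n * n * (n - 1) * d * (d - 1) * (d - 2)) / 12 := by
    linarith
  simp only [Z'mean, Z', add_div, sum_sum_add, sum_sum_add_sub_sq, div_pow, ← sum_div, hS1, hS2]
  field_simp
  ring

theorem neg_one_pow_mul_div_card_intTuples_le_one {d n : ℕ} (hn : 7 ≤ n) (hnd : n ≤ d) :
    (-1) ^ n * n * (n - 1) * (d - 1) * (d - 2) / (6 * d * #(intTuples d n) : ℝ) ≤ 1 := by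
  have hn' : (7 : ℝ) ≤ n := by exact_mod_cast hn
  have hnd' : (n : ℝ) ≤ d := by exact_mod_cast hnd
  set E : ℝ := d - 1
  have hE : (6 : ℝ) ≤ E := by linarith
  have hC : 0 ≤ (n : ℝ) * (n - 1) * (d - 1) * (d - 2) := by
    apply mul_nonneg (mul_nonneg (mul_nonneg _ _) _) _ <;> linarith
  have hpow : E ^ 7 ≤ E ^ n := pow_le_pow_right₀ (by linarith) hn
  have hE7 : 2 * E ^ 4 + E ≤ E ^ 7 := by
    have h3 : (3 : ℝ) ≤ E ^ 3 := le_trans (by norm_num) (pow_le_pow_left₀ (by norm_num) hE 3)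
    have h4 : E ≤ E ^ 4 := le_self_pow₀ (by linarith) (by norm_num)
    nlinarith
  have hCE : (n : ℝ) * (n - 1) * (d - 1) * (d - 2) ≤ 2 * E ^ 4 := by
    have h1 : (n : ℝ) ≤ 2 * E := by linarith
    have h2 : (n : ℝ) - 1 ≤ E := by linarith
    have h3 : (d : ℝ) - 2 ≤ E := by linarith
    calc (n : ℝ) * (n - 1) * (d - 1) * (d - 2) ≤ (2 * E) * E * E * E := by gcongr <;> linarith
      _ = 2 * E ^ 4 := by ring
  have hN := sub_le_mul_card_intTuples (by omega : 0 < d) n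
  rw [div_le_one (by nlinarith)]
  rcases neg_one_pow_eq_or ℝ n with h | h <;> rw [h] <;> nlinarith

/-- For `d ≥ n ≥ 500000`, the variance of `Z'_d(n)` satisfies
`Var(Z'_d(n)) ≥ n(d−3)/(6d) − √(3n)`. -/
theorem stmt_14 (d n : ℕ) (hnd : n ≤ d) (hn : 500000 ≤ n) :
    (∑ a ∈ intTuples d n, ∑ b ∈ intTuples d n, (Z' d n a b - Z'mean d n) ^ 2)
        / ((intTuples d n).card : ℝ) ^ 2
    ≥ (n : ℝ) * ((d : ℝ) - 3) / (6 * d) - Real.sqrt (3 * n) := by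
  rw [ge_iff_le, variance_Z'_eq (by omega) (by omega)]
  have herr := neg_one_pow_mul_div_card_intTuples_le_one (by omega) hnd
  have hsqrt : 1 ≤ Real.sqrt (3 * n) := by
    rw [Real.one_le_sqrt]
    have : (500000 : ℝ) ≤ n := by exact_mod_cast hn
    linarith
  have hd : (n : ℝ) * (d - 3) / (6 * d) ≤ n * (d - 2) / (6 * d) := by
    gcongr
    linarith
  linarith
end

section
/- For d ≥ n ≥ 500000, the variance of Z'_d(n) satisfies Var(Z'_d(n)) ≤ n/5.1. -/
open Finset

section Mean

variable {α : Type*} (s : Finset α) (f : α → ℝ)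

theorem sum_sub_mean_eq_zero : ∑ a ∈ s, (f a - (∑ b ∈ s, f b) / #s) = 0 := by
  rcases s.eq_empty_or_nonempty with rfl | hs
  · simp
  rw [sum_sub_distrib, sum_const, nsmul_eq_mul,
    mul_div_cancel₀ _ (Nat.cast_ne_zero.2 hs.card_ne_zero), sub_self]

theorem sum_sq_sub_eq_sum_sq_sub_mean_add (c : ℝ) :
    ∑ a ∈ s, (f a - c) ^ 2 =
      ∑ a ∈ s, (f a - (∑ b ∈ s, f b) / #s) ^ 2 + #s * ((∑ b ∈ s, f b) / #s - c) ^ 2 := by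
  set μ := (∑ b ∈ s, f b) / #s
  calc ∑ a ∈ s, (f a - c) ^ 2
      = ∑ a ∈ s, ((f a - μ) ^ 2 + 2 * (μ - c) * (f a - μ) + (μ - c) ^ 2) :=
        sum_congr rfl fun _ _ => by ring
    _ = _ := by
        rw [sum_add_distrib, sum_add_distrib, ← mul_sum, sum_sub_mean_eq_zero, sum_const,
          nsmul_eq_mul, mul_zero, add_zero]

theorem sum_sq_sub_mean_le (c : ℝ) :
    ∑ a ∈ s, (f a - (∑ b ∈ s, f b) / #s) ^ 2 ≤ ∑ a ∈ s, (f a - c) ^ 2 := by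
  rw [sum_sq_sub_eq_sum_sq_sub_mean_add s f c]
  exact le_add_of_nonneg_right (by positivity)

theorem sum_sum_sq_add_sub_mean :
    ∑ a ∈ s, ∑ b ∈ s, (f a + f b - (∑ a ∈ s, ∑ b ∈ s, (f a + f b)) / #s ^ 2) ^ 2 =
      2 * #s * ∑ a ∈ s, (f a - (∑ b ∈ s, f b) / #s) ^ 2 := by
  rcases s.eq_empty_or_nonempty with rfl | hs
  · simp
  set μ := (∑ b ∈ s, f b) / #s
  have hcard : (#s : ℝ) ≠ 0 := Nat.cast_ne_zero.2 hs.card_ne_zero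
  have hmean : (∑ a ∈ s, ∑ b ∈ s, (f a + f b)) / #s ^ 2 = 2 * μ := by
    simp only [sum_add_distrib, sum_const, nsmul_eq_mul, ← mul_sum, μ]
    field_simp
    ring
  have hu : ∑ a ∈ s, (f a - μ) = 0 := sum_sub_mean_eq_zero s f
  calc ∑ a ∈ s, ∑ b ∈ s, (f a + f b - (∑ a ∈ s, ∑ b ∈ s, (f a + f b)) / #s ^ 2) ^ 2
      = ∑ a ∈ s, ∑ b ∈ s, ((f a - μ) ^ 2 + 2 * (f a - μ) * (f b - μ) + (f b - μ) ^ 2) := by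
        rw [hmean]; exact sum_congr rfl fun _ _ => sum_congr rfl fun _ _ => by ring
    _ = _ := by
        simp only [sum_add_distrib, sum_const, nsmul_eq_mul, ← mul_sum, ← sum_mul, hu]
        ring

end Mean

theorem Fintype.sum_pi_fin_succ {α M : Type*} [Fintype α] [AddCommMonoid M] {m : ℕ}
    (F : (Fin (m + 1) → α) → M) : ∑ a, F a = ∑ x, ∑ a : Fin m → α, F (Fin.cons x a) := by
  rw [← Fintype.sum_prod_type']
  exact (Fintype.sum_equiv (Fin.consEquiv fun _ => α) _ _ fun _ => rfl).symm

theorem sum_pi_sq_sum_of_sum_eq_zero {α : Type*} [Fintype α] (g : α → ℝ) (hg : ∑ x, g x = 0)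
    (m : ℕ) :
    ∑ a : Fin m → α, (∑ i, g (a i)) ^ 2 = m * Fintype.card α ^ (m - 1) * ∑ x, g x ^ 2 := by
  induction m with
  | zero => simp
  | succ m ih =>
    have hsplit : ∀ (x : α) (a : Fin m → α), (∑ i, g ((Fin.cons x a : Fin (m + 1) → α) i)) ^ 2 =
        g x ^ 2 + 2 * g x * ∑ i, g (a i) + (∑ i, g (a i)) ^ 2 := fun x a => by
      rw [Fin.sum_univ_succ]; simp only [Fin.cons_zero, Fin.cons_succ]; ring
    simp only [Fintype.sum_pi_fin_succ, hsplit, sum_add_distrib, sum_const, card_univ,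
      Fintype.card_pi, prod_const, Fintype.card_fin, ← sum_mul, ← mul_sum, hg, ih, nsmul_eq_mul]
    rcases m with _ | m
    · simp
    · push_cast; ring

theorem sum_range_cast_sub (k : ℕ) (c : ℝ) :
    ∑ x ∈ range k, ((x : ℝ) - c) = k * (k - 1) / 2 - k * c := by
  induction k with
  | zero => simp
  | succ k ih => rw [sum_range_succ, ih]; push_cast; ring

theorem sum_range_cast_sub_sq (k : ℕ) (c : ℝ) :
    ∑ x ∈ range k, ((x : ℝ) - c) ^ 2 =
      k * (k - 1) * (2 * k - 1) / 6 - c * k * (k - 1) + k * c ^ 2 := by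
  induction k with
  | zero => simp
  | succ k ih => rw [sum_range_succ, ih]; push_cast; ring

theorem tupleSum_sub_eq_sum (d m : ℕ) (a : Fin m → Fin (d - 1)) :
    (tupleSum d m a : ℝ) - m * d / 2 = ∑ i, (((a i : ℕ) : ℝ) - (d / 2 - 1)) := by
  push_cast [tupleSum]
  rw [sum_sub_distrib, sum_add_distrib, sum_const, sum_const, card_univ, Fintype.card_fin,
    nsmul_eq_mul, nsmul_eq_mul]
  ring

theorem sum_sq_tupleSum_sub (d m : ℕ) (hd : 0 < d) :
    ∑ a : Fin m → Fin (d - 1), ((tupleSum d m a : ℝ) - m * d / 2) ^ 2 =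
      m * ((d : ℝ) - 1) ^ m * (d * (d - 2) / 12) := by
  have hcast : ((d - 1 : ℕ) : ℝ) = d - 1 := Nat.cast_pred hd
  have hg : ∑ v : Fin (d - 1), (((v : ℕ) : ℝ) - (d / 2 - 1)) = 0 := by
    rw [Fin.sum_univ_eq_sum_range (fun v => (v : ℝ) - (d / 2 - 1)), sum_range_cast_sub, hcast]
    ring
  simp only [tupleSum_sub_eq_sum]
  rw [sum_pi_sq_sum_of_sum_eq_zero _ hg,
    Fin.sum_univ_eq_sum_range (fun v => ((v : ℝ) - (d / 2 - 1)) ^ 2), sum_range_cast_sub_sq,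
    Fintype.card_fin, hcast]
  rcases m with _ | m
  · simp
  · rw [Nat.add_sub_cancel, pow_succ]
    push_cast
    ring

section IntTuples

variable {d m : ℕ}

theorem tupleSum_succ (a : Fin (m + 1) → Fin (d - 1)) :
    tupleSum d (m + 1) a = ((a 0 : ℕ) + 1) + tupleSum d m (Fin.tail a) :=
  Fin.sum_univ_succ _

theorem injOn_tail_intTuples :
    Set.InjOn Fin.tail (intTuples d (m + 1) : Set (Fin (m + 1) → Fin (d - 1))) := by
  intro a ha b hb hab
  simp only [intTuples, mem_coe, mem_filter, mem_univ, true_and, tupleSum_succ] at ha hb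
  rw [hab] at ha
  have h0 : (a 0 : ℕ) + 1 = b 0 + 1 :=
    Nat.ModEq.eq_of_lt_of_lt
      (((Nat.modEq_zero_iff_dvd.2 ha).trans (Nat.modEq_zero_iff_dvd.2 hb).symm).add_right_cancel' _)
      (by omega) (by omega)
  rw [← Fin.cons_self_tail a, ← Fin.cons_self_tail b, hab, Fin.ext (by omega : (a 0 : ℕ) = b 0)]

theorem image_tail_intTuples (hd : 0 < d) :
    (intTuples d (m + 1)).image Fin.tail = ({a | ¬ d ∣ tupleSum d m a} : Finset _) := by
  ext a'
  simp only [intTuples, mem_image, mem_filter, mem_univ, true_and, tupleSum_succ]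
  constructor
  · rintro ⟨a, ha, rfl⟩ hdvd
    have := Nat.le_of_dvd (Nat.succ_pos _) ((Nat.dvd_add_left hdvd).1 ha)
    omega
  · intro h
    have hmod : 0 < tupleSum d m a' % d :=
      Nat.pos_of_ne_zero fun h0 => h (Nat.dvd_of_mod_eq_zero h0)
    have hlt := Nat.mod_lt (tupleSum d m a') hd
    refine ⟨Fin.cons ⟨d - tupleSum d m a' % d - 1, by omega⟩ a', ?_, Fin.tail_cons _ _⟩
    refine ⟨1 + tupleSum d m a' / d, ?_⟩
    simp only [Fin.cons_zero, Fin.tail_cons]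
    have := Nat.mod_add_div (tupleSum d m a') d
    rw [mul_add]
    omega

theorem card_intTuples_succ_add (hd : 0 < d) :
    #(intTuples d (m + 1)) + #(intTuples d m) = (d - 1) ^ m := by
  rw [← card_image_of_injOn injOn_tail_intTuples, image_tail_intTuples hd, add_comm, intTuples,
    card_filter_add_card_filter_not, card_univ, Fintype.card_fun, Fintype.card_fin,
    Fintype.card_fin]

theorem card_intTuples_mul (hd : 0 < d) (n : ℕ) :
    (#(intTuples d n) : ℝ) * d = (d - 1) ^ n + (d - 1) * (-1) ^ n := by
  induction n with
  | zero =>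
    simp [intTuples, tupleSum]
  | succ n ih =>
    have h := congrArg (Nat.cast : ℕ → ℝ) (card_intTuples_succ_add hd (m := n))
    push_cast [Nat.cast_sub hd] at h
    linear_combination (d : ℝ) * h - ih

theorem sum_intTuples_succ_sq_le {ε : ℝ} (hε : 0 < ε) :
    ∑ a ∈ intTuples d (m + 1), ((tupleSum d (m + 1) a : ℝ) - (m + 1) * d / 2) ^ 2 ≤
      (1 + ε) * ∑ a : Fin m → Fin (d - 1), ((tupleSum d m a : ℝ) - m * d / 2) ^ 2 +
        (1 + ε⁻¹) * (d / 2) ^ 2 * #(intTuples d (m + 1)) := by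
  have hterm : ∀ a : Fin (m + 1) → Fin (d - 1),
      ((tupleSum d (m + 1) a : ℝ) - (m + 1) * d / 2) ^ 2 ≤
        (1 + ε) * ((tupleSum d m (Fin.tail a) : ℝ) - m * d / 2) ^ 2 + (1 + ε⁻¹) * (d / 2) ^ 2 := by
    intro a
    set x := (tupleSum d m (Fin.tail a) : ℝ) - m * d / 2
    set y := ((a 0 : ℕ) : ℝ) + 1 - d / 2
    have hy : y ^ 2 ≤ (d / 2) ^ 2 := by
      have : ((a 0 : ℕ) : ℝ) + 1 ≤ d := by exact_mod_cast (by omega : (a 0 : ℕ) + 1 ≤ d)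
      apply sq_le_sq' <;> simp only [y] <;> linarith [Nat.cast_nonneg (α := ℝ) (a 0 : ℕ)]
    have hsplit : (tupleSum d (m + 1) a : ℝ) - (m + 1) * d / 2 = x + y := by
      rw [tupleSum_succ]; push_cast; ring
    rw [hsplit]
    nlinarith [two_mul_le_add_mul_sq (a := x) (b := y) hε, inv_pos.2 hε]
  calc ∑ a ∈ intTuples d (m + 1), ((tupleSum d (m + 1) a : ℝ) - (m + 1) * d / 2) ^ 2
      ≤ ∑ a ∈ intTuples d (m + 1),
          ((1 + ε) * ((tupleSum d m (Fin.tail a) : ℝ) - m * d / 2) ^ 2 +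
            (1 + ε⁻¹) * (d / 2) ^ 2) :=
        sum_le_sum fun a _ => hterm a
    _ = (1 + ε) * ∑ a ∈ (intTuples d (m + 1)).image Fin.tail,
            ((tupleSum d m a : ℝ) - m * d / 2) ^ 2 +
          (1 + ε⁻¹) * (d / 2) ^ 2 * #(intTuples d (m + 1)) := by
        rw [sum_add_distrib, ← mul_sum, sum_image injOn_tail_intTuples, sum_const, nsmul_eq_mul]
        ring
    _ ≤ _ := by
        gcongr
        exact subset_univ _

theorem sub_two_mul_pow_le_mul_card_intTuples (hd : 2 ≤ d) (hm : m ≠ 0) :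
    ((d : ℝ) - 2) * (d - 1) ^ m ≤ d * #(intTuples d (m + 1)) := by
  have hcard := card_intTuples_mul (by omega : 0 < d) (m + 1)
  have hd' : (2 : ℝ) ≤ d := by exact_mod_cast hd
  have hpow : (d : ℝ) - 1 ≤ (d - 1) ^ m := le_self_pow₀ (by linarith) hm
  have hsign : -1 ≤ (-1 : ℝ) ^ (m + 1) := by
    simpa using neg_abs_le ((-1 : ℝ) ^ (m + 1))
  rw [pow_succ] at hcard
  nlinarith [mul_le_mul_of_nonneg_left hsign (by linarith : (0 : ℝ) ≤ d - 1)]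

end IntTuples

theorem variance_Z'_le (d n : ℕ) (hd : 0 < d) :
    (∑ a ∈ intTuples d n, ∑ b ∈ intTuples d n, (Z' d n a b - Z'mean d n) ^ 2)
        / (#(intTuples d n) : ℝ) ^ 2 ≤
      2 * (∑ a ∈ intTuples d n, ((tupleSum d n a : ℝ) - n * d / 2) ^ 2)
        / (d ^ 2 * #(intTuples d n)) := by
  set I := intTuples d n
  set Y : (Fin n → Fin (d - 1)) → ℝ := fun a => tupleSum d n a / d
  have hZ : ∀ a b, Z' d n a b = Y a + Y b := fun _ _ => add_div _ _ _
  have hY : ∀ a, (Y a - n / 2) ^ 2 = ((tupleSum d n a : ℝ) - n * d / 2) ^ 2 / d ^ 2 := fun a => by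
    simp only [Y]
    field_simp
  calc (∑ a ∈ I, ∑ b ∈ I, (Z' d n a b - Z'mean d n) ^ 2) / (#I : ℝ) ^ 2
      = 2 * (∑ a ∈ I, (Y a - (∑ b ∈ I, Y b) / #I) ^ 2) / #I := by
        simp only [Z'mean, hZ]
        rw [sum_sum_sq_add_sub_mean]
        field_simp
    _ ≤ 2 * (∑ a ∈ I, (Y a - n / 2) ^ 2) / #I := by
        gcongr 2 * ?_ / _
        exact sum_sq_sub_mean_le _ _ _
    _ = _ := by
        simp only [hY, ← sum_div]
        field_simp

/-- For `d ≥ n ≥ 500000`, the variance of `Z'_d(n)` satisfies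
`Var(Z'_d(n)) ≤ n/5.1`. -/
theorem stmt_15 (d n : ℕ) (hnd : n ≤ d) (hn : 500000 ≤ n) :
    (∑ a ∈ intTuples d n, ∑ b ∈ intTuples d n, (Z' d n a b - Z'mean d n) ^ 2)
        / ((intTuples d n).card : ℝ) ^ 2
    ≤ (n : ℝ) / 5.1 := by
  obtain ⟨m, rfl⟩ : ∃ m, n = m + 1 := ⟨n - 1, by omega⟩
  have hd : (3 : ℝ) ≤ d := by exact_mod_cast (by omega : 3 ≤ d)
  have hm : (499999 : ℝ) ≤ m := by exact_mod_cast (by omega : 499999 ≤ m)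
  have hcount := sub_two_mul_pow_le_mul_card_intTuples (d := d) (by omega) (by omega : m ≠ 0)
  have hI : (0 : ℝ) < #(intTuples d (m + 1)) := by
    have : (0 : ℝ) < ((d : ℝ) - 2) * (d - 1) ^ m := mul_pos (by linarith) (pow_pos (by linarith) _)
    exact pos_of_mul_pos_right (this.trans_le hcount) (by positivity)
  have hT := sum_intTuples_succ_sq_le (d := d) (m := m) (by norm_num : (0 : ℝ) < 1 / 10)
  rw [sum_sq_tupleSum_sub d m (by omega)] at hT
  calc _ ≤ _ := variance_Z'_le d (m + 1) (by omega)
    _ ≤ 2 * ((1 + 1 / 10) * (m * (d - 1) ^ m * (d * (d - 2) / 12)) +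
          (1 + (1 / 10)⁻¹) * (d / 2) ^ 2 * #(intTuples d (m + 1))) /
          (d ^ 2 * #(intTuples d (m + 1))) := by
        push_cast
        gcongr
    _ ≤ 11 / 60 * m + 11 / 2 := by
        rw [div_le_iff₀ (by positivity)]
        linarith [mul_le_mul_of_nonneg_left hcount (by positivity : (0 : ℝ) ≤ m * d)]
    _ ≤ ((m + 1 : ℕ) : ℝ) / 5.1 := by
        rw [le_div_iff₀ (by norm_num)]
        push_cast
        norm_num
        linarith
end

section
/- The convolution of two log-concave sequences of nonnegative reals is log-concave; consequently, the distribution of the sum of two independent integer-valued random variables each with log-concave probability mass function is log-concave. -/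
/-!
Write `a ⋆ b` for the convolution. Reindexing, `(a ⋆ b)(k-1) · (a ⋆ b)(k+1)` and `(a ⋆ b)(k)²` are
both double sums over pairs `(m, m')`; after symmetrising in `(m, m')`, the difference of their
summands factors as `(a m a (m'-1) - a (m-1) a m') (b (k-m) b (k+1-m') - b (k-m') b (k+1-m))`.
Log-concavity with contiguous support makes `a (m-1) a m' ≤ a m a (m'-1)` whenever `m ≤ m'`
(the ratios `a m / a (m-1)` decrease), so both factors have the sign of `m' - m`.
-/

structure IsLogConcaveSeq (a : ℤ → ℝ) : Prop where
  nonneg : ∀ i, 0 ≤ a i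
  ne_zero_of_le_of_le : ∀ i j k : ℤ, i ≤ j → j ≤ k → a i ≠ 0 → a k ≠ 0 → a j ≠ 0
  mul_le_sq : ∀ i, a (i - 1) * a (i + 1) ≤ a i ^ 2

theorem mul_le_mul_of_logConcave_of_pos {a : ℤ → ℝ} (hLC : ∀ i, a (i - 1) * a (i + 1) ≤ a i ^ 2)
    {x y : ℤ} (hxy : x ≤ y) (hpos : ∀ j, x - 1 ≤ j → j ≤ y + 1 → 0 < a j) :
    a (x - 1) * a (y + 1) ≤ a x * a y := by
  induction y, hxy using Int.leInduction with
  | base => simpa [sq] using hLC x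
  | succ y hxy ih =>
    have ih := ih fun j h₁ h₂ => hpos j h₁ (by omega)
    have hlc : a y * a (y + 1 + 1) ≤ a (y + 1) ^ 2 := by simpa using hLC (y + 1)
    have hy : 0 < a y := hpos y (by omega) (by omega)
    have hy₁ : 0 < a (y + 1) := hpos (y + 1) (by omega) (by omega)
    have hx₁ : 0 ≤ a (x - 1) := (hpos (x - 1) le_rfl (by omega)).le
    refine le_of_mul_le_mul_right ?_ hy
    calc a (x - 1) * a (y + 1 + 1) * a y
        = a (x - 1) * (a y * a (y + 1 + 1)) := by ring
      _ ≤ a (x - 1) * a (y + 1) ^ 2 := mul_le_mul_of_nonneg_left hlc hx₁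
      _ = a (x - 1) * a (y + 1) * a (y + 1) := by ring
      _ ≤ a x * a y * a (y + 1) := mul_le_mul_of_nonneg_right ih hy₁.le
      _ = a x * a (y + 1) * a y := by ring

namespace IsLogConcaveSeq

variable {a b : ℤ → ℝ}

theorem mul_le_mul_of_le (ha : IsLogConcaveSeq a) {x y : ℤ} (hxy : x ≤ y) :
    a (x - 1) * a (y + 1) ≤ a x * a y := by
  by_cases hend : a (x - 1) = 0 ∨ a (y + 1) = 0
  · have := mul_nonneg (ha.nonneg x) (ha.nonneg y)
    rcases hend with h | h <;> simpa [h]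
  rw [not_or] at hend
  exact mul_le_mul_of_logConcave_of_pos ha.mul_le_sq hxy fun j h₁ h₂ =>
    (ha.nonneg j).lt_of_ne' (ha.ne_zero_of_le_of_le _ _ _ h₁ h₂ hend.1 hend.2)

theorem mul_le_mul_sub_one (ha : IsLogConcaveSeq a) {m m' : ℤ} (h : m ≤ m') :
    a (m - 1) * a m' ≤ a m * a (m' - 1) := by
  rcases h.eq_or_lt with rfl | h
  · exact (mul_comm _ _).le
  · simpa using ha.mul_le_mul_of_le (x := m) (y := m' - 1) (by omega)

theorem mul_le_mul_sub_sub (hb : IsLogConcaveSeq b) (k : ℤ) {m m' : ℤ} (h : m ≤ m') :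
    b (k - m') * b (k + 1 - m) ≤ b (k - m) * b (k + 1 - m') := by
  have e : ∀ n, k + 1 - n - 1 = k - n := fun n => by ring
  simpa [e, mul_comm] using hb.mul_le_mul_sub_one (m := k + 1 - m') (m' := k + 1 - m) (by omega)

theorem cross_difference_nonneg (ha : IsLogConcaveSeq a) (hb : IsLogConcaveSeq b) (k m m' : ℤ) :
    0 ≤ (a m * a (m' - 1) - a (m - 1) * a m') *
      (b (k - m) * b (k + 1 - m') - b (k - m') * b (k + 1 - m)) := by
  rcases le_total m m' with h | h
  · exact mul_nonneg (sub_nonneg.2 (ha.mul_le_mul_sub_one h))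
      (sub_nonneg.2 (hb.mul_le_mul_sub_sub k h))
  · exact mul_nonneg_of_nonpos_of_nonpos (by linarith [ha.mul_le_mul_sub_one h])
      (by linarith [hb.mul_le_mul_sub_sub k h])

end IsLogConcaveSeq

theorem hasSum_mul_add_mul_swap {ι : Type*} {f g : ι → ℝ} (hf : Summable f) (hg : Summable g)
    (hf₀ : ∀ i, 0 ≤ f i) (hg₀ : ∀ i, 0 ≤ g i) :
    HasSum (fun x : ι × ι => f x.1 * g x.2 + f x.2 * g x.1) (2 * ((∑' i, f i) * ∑' i, g i)) := by
  have hfg : HasSum (fun x : ι × ι => f x.1 * g x.2) ((∑' i, f i) * ∑' i, g i) := by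
    have hs := hf.mul_of_nonneg hg hf₀ hg₀
    exact hf.tsum_mul_tsum hg hs ▸ hs.hasSum
  rw [two_mul]
  exact hfg.add ((Equiv.prodComm ι ι).hasSum_iff.mpr hfg)

theorem tsum_mul_tsum_le_of_add_swap_le {ι : Type*} {f₀ f₁ g₀ g₁ : ι → ℝ}
    (hf₀ : Summable f₀) (hf₁ : Summable f₁) (hg₀ : Summable g₀) (hg₁ : Summable g₁)
    (hf₀' : ∀ i, 0 ≤ f₀ i) (hf₁' : ∀ i, 0 ≤ f₁ i) (hg₀' : ∀ i, 0 ≤ g₀ i) (hg₁' : ∀ i, 0 ≤ g₁ i)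
    (h : ∀ p q, f₀ p * g₁ q + f₀ q * g₁ p ≤ f₁ p * g₀ q + f₁ q * g₀ p) :
    (∑' i, f₀ i) * (∑' i, g₁ i) ≤ (∑' i, f₁ i) * (∑' i, g₀ i) := by
  have := hasSum_le (fun x : ι × ι => h x.1 x.2) (hasSum_mul_add_mul_swap hf₀ hg₁ hf₀' hg₁')
    (hasSum_mul_add_mul_swap hf₁ hg₀ hf₁' hg₀')
  linarith

/-- The convolution of two log-concave sequences of nonnegative reals (with
contiguous support) is log-concave.  In particular (taking `a` and `b` to be
probability mass functions, i.e. with total sum 1), the distribution of the sum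
of two independent integer-valued random variables, each with log-concave
probability mass function, is log-concave. -/
theorem stmt_17 (a b : ℤ → ℝ)
    (ha : ∀ i, 0 ≤ a i) (hb : ∀ i, 0 ≤ b i)
    (haSupp : ∀ i j k : ℤ, i ≤ j → j ≤ k → a i ≠ 0 → a k ≠ 0 → a j ≠ 0)
    (hbSupp : ∀ i j k : ℤ, i ≤ j → j ≤ k → b i ≠ 0 → b k ≠ 0 → b j ≠ 0)
    (haLC : ∀ i, a (i - 1) * a (i + 1) ≤ a i ^ 2)
    (hbLC : ∀ i, b (i - 1) * b (i + 1) ≤ b i ^ 2)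
    (hconv : ∀ k : ℤ, Summable (fun i => a i * b (k - i))) :
    ∀ k : ℤ,
      (∑' i, a i * b ((k - 1) - i)) * (∑' i, a i * b ((k + 1) - i))
        ≤ (∑' i, a i * b (k - i)) ^ 2 := by
  intro k
  have hA : IsLogConcaveSeq a := ⟨ha, haSupp, haLC⟩
  have hB : IsLogConcaveSeq b := ⟨hb, hbSupp, hbLC⟩
  have shift (n : ℤ) : ∑' i, a i * b (n - i) = ∑' m, a (m - 1) * b (n + 1 - m) := by
    rw [← (Equiv.subRight (1 : ℤ)).tsum_eq]
    exact tsum_congr fun m => by simp only [Equiv.subRight_apply]; ring_nf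
  have shift_summable (n : ℤ) : Summable fun m => a (m - 1) * b (n + 1 - m) :=
    ((Equiv.subRight (1 : ℤ)).summable_iff.mpr (hconv n)).congr fun m => by
      simp only [Function.comp_apply, Equiv.subRight_apply]; ring_nf
  have hnonneg (f g : ℤ → ℤ) (m : ℤ) : 0 ≤ a (f m) * b (g m) := mul_nonneg (ha _) (hb _)
  rw [shift (k - 1), sq]
  nth_rewrite 2 [shift k]
  simp only [sub_add_cancel]
  refine tsum_mul_tsum_le_of_add_swap_le (by simpa using shift_summable (k - 1)) (hconv k)
    (shift_summable k) (hconv (k + 1)) (hnonneg _ _) (hnonneg _ _) (hnonneg _ _) (hnonneg _ _)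
    fun p q => ?_
  linear_combination hA.cross_difference_nonneg hB k p q
end
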